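/- Suppose λT is weakly hypercyclic with support N for some λ ∈ ℂ with |λ| ≤ 1 and some positive integer N, i.e., there exists x₀ ∈ X such that {(λT)^{k₁}x₀ + ⋯ + (λT)^{k_N}x₀ : k₁, …, k_N ≥ 0} is dense in X for the weak topology. If {T_n} is a sequence in κ(T) with sup_n ‖T_n‖ < ∞ which is (n₀,0)-regular for some nonnegative integer n₀, then T_n x → 0 in norm for every x ∈ X. -/

import Mathlib

open Filter Topology

/-- Membership in κ(T): operators of the form Σ_{j≥0} t_j T^j with t_j ≥ 0,
Σ t_j = 1, and the series converging in operator norm. -/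
def InKappa {X : Type*} [NormedAddCommGroup X] [NormedSpace ℂ X]
    (T S : X →L[ℂ] X) : Prop :=
  ∃ t : ℕ → ℝ, (∀ j, 0 ≤ t j) ∧ HasSum t 1 ∧ HasSum (fun j => t j • T ^ j) S

/-- (n₀,m)-regularity: ‖(T T_n − T_{n+n₀})x‖ → 0 for every x ∈ range((T−I)^m). -/
def RegularSeq {X : Type*} [NormedAddCommGroup X] [NormedSpace ℂ X]
    (T : X →L[ℂ] X) (Tn : ℕ → X →L[ℂ] X) (n₀ m : ℕ) : Prop :=
  ∀ x ∈ Set.range ⇑((T - 1) ^ m),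
    Tendsto (fun n => ‖T (Tn n x) - Tn (n + n₀) x‖) atTop (𝓝 0)

/-!
Each `T_n` is a power series in `T`, so it commutes with `T`, and regularity iterates to
`T^k T_n x - T_{n + k n₀} x → 0`. Hence on the sums `y = Σ_i (λT)^{k_i} x₀` the norms `‖T_n y‖`
are eventually at most `N (C ‖x₀‖ + 1)`, a bound that does not depend on `y`. The vectors with
this eventual bound form a convex set, so by Mazur's theorem it contains the norm-dense convex hull
of the weakly dense orbit sums; since the `T_n` are uniformly bounded, every `x` then satisfies an
eventual bound independent of `x`, and scaling `x` forces `T_n x → 0`.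
-/

theorem InKappa.commute {X : Type*} [NormedAddCommGroup X] [NormedSpace ℂ X]
    {T S : X →L[ℂ] X} (h : InKappa T S) : Commute T S := by
  obtain ⟨t, -, -, hS⟩ := h
  have hTS : HasSum (fun j => t j • T ^ (j + 1)) (T * S) := by
    simpa [mul_smul_comm, pow_succ'] using hS.mul_left T
  have hST : HasSum (fun j => t j • T ^ (j + 1)) (S * T) := by
    simpa [smul_mul_assoc, pow_succ] using hS.mul_right T
  exact hTS.unique hST

theorem RegularSeq.tendsto_sub_zero {X : Type*} [NormedAddCommGroup X] [NormedSpace ℂ X]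
    {T : X →L[ℂ] X} {Tn : ℕ → X →L[ℂ] X} {n₀ : ℕ} (h : RegularSeq T Tn n₀ 0) (x : X) :
    Tendsto (fun n => T (Tn n x) - Tn (n + n₀) x) atTop (𝓝 0) :=
  tendsto_zero_iff_norm_tendsto_zero.mpr (h x ⟨x, rfl⟩)

theorem tendsto_pow_apply_sub_shift {R E : Type*} [Semiring R] [AddCommGroup E] [Module R E]
    [TopologicalSpace E] [IsTopologicalAddGroup E] (T : E →L[R] E) {u : ℕ → E} {n₀ : ℕ}
    (h : Tendsto (fun n => T (u n) - u (n + n₀)) atTop (𝓝 0)) (k : ℕ) :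
    Tendsto (fun n => (T ^ k) (u n) - u (n + k * n₀)) atTop (𝓝 0) := by
  induction k with
  | zero => simpa using tendsto_const_nhds
  | succ k ih =>
    have hT := (T.continuous.tendsto 0).comp ih
    rw [map_zero] at hT
    convert hT.add (h.comp (tendsto_add_atTop_nat (k * n₀))) using 2 with n
    · simp only [Function.comp_apply, pow_succ', mul_apply_eq_comp, map_sub, add_mul, one_mul,
        add_assoc]
      abel
    · rw [add_zero]

section

variable {ι 𝕜 E F : Type*} [RCLike 𝕜] [SeminormedAddCommGroup E] [NormedSpace 𝕜 E]
  [SeminormedAddCommGroup F] [NormedSpace 𝕜 F] {l : Filter ι} {A : ι → E →L[𝕜] F} {B : ℝ}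

theorem convex_setOf_eventually_norm_apply_le [NormedSpace ℝ E] [IsScalarTower ℝ 𝕜 E]
    [NormedSpace ℝ F] [IsScalarTower ℝ 𝕜 F] :
    Convex ℝ {y | ∀ᶠ i in l, ‖A i y‖ ≤ B} := by
  intro a ha b hb p q hp hq hpq
  filter_upwards [ha, hb] with i hai hbi
  calc ‖A i (p • a + q • b)‖ ≤ p * ‖A i a‖ + q * ‖A i b‖ := by
        rw [map_add, (A i).map_smul_of_tower, (A i).map_smul_of_tower]
        refine (norm_add_le _ _).trans_eq ?_
        rw [norm_smul, norm_smul, Real.norm_of_nonneg hp, Real.norm_of_nonneg hq]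
    _ ≤ p * B + q * B := by gcongr
    _ = B := by rw [← add_mul, hpq, one_mul]

theorem eventually_norm_apply_le_add_of_dense {C : ℝ} (hA : ∀ i, ‖A i‖ ≤ C)
    (hdense : Dense {y | ∀ᶠ i in l, ‖A i y‖ ≤ B}) (x : E) :
    ∀ᶠ i in l, ‖A i x‖ ≤ B + C := by
  obtain ⟨z, hz, hxz⟩ := hdense.exists_dist_lt x one_pos
  filter_upwards [hz] with i hi
  calc ‖A i x‖ ≤ ‖A i z‖ + ‖A i (x - z)‖ := by
        rw [map_sub]; exact norm_le_norm_add_norm_sub' _ _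
    _ ≤ B + ‖A i‖ * 1 := by
        gcongr
        exact (A i).le_opNorm_of_le (by rw [← dist_eq_norm]; exact hxz.le)
    _ ≤ B + C := by rw [mul_one]; gcongr; exact hA i

theorem tendsto_apply_zero_of_eventually_norm_apply_le (h : ∀ x, ∀ᶠ i in l, ‖A i x‖ ≤ B)
    (x : E) : Tendsto (fun i => A i x) l (𝓝 0) := by
  rw [NormedAddGroup.tendsto_nhds_zero]
  intro ε hε
  obtain ⟨t, ht, hεt⟩ : ∃ t : ℝ, 0 < t ∧ ε * t = |B| + ε :=
    ⟨|B| / ε + 1, by positivity, by field_simp⟩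
  filter_upwards [h ((t : 𝕜) • x)] with i hi
  rw [map_smul, norm_smul, RCLike.norm_ofReal, abs_of_pos ht] at hi
  nlinarith [le_abs_self B]

end

theorem dense_convexHull_of_dense_weakSpace {𝕜 E : Type*} [RCLike 𝕜] [AddCommGroup E]
    [Module 𝕜 E] [Module ℝ E] [IsScalarTower ℝ 𝕜 E] [TopologicalSpace E]
    [IsTopologicalAddGroup E] [ContinuousSMul 𝕜 E] [LocallyConvexSpace ℝ E] {s : Set E}
    (hs : @Dense (WeakSpace 𝕜 E) _ s) : Dense (convexHull ℝ s) := by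
  have h := (convex_convexHull ℝ s).toWeakSpace_closure 𝕜
  have himg (t : Set E) : toWeakSpace 𝕜 E '' t = t := Set.image_id t
  rw [himg, himg] at h
  rw [dense_iff_closure_eq, h]
  exact Set.eq_univ_of_univ_subset (hs.closure_eq ▸ closure_mono (subset_convexHull ℝ s))

section

variable {𝕜 E : Type*} [NontriviallyNormedField 𝕜] [SeminormedAddCommGroup E] [NormedSpace 𝕜 E]
  {T : E →L[𝕜] E} {Tn : ℕ → E →L[𝕜] E} {n₀ : ℕ} {C : ℝ} {x : E}

theorem eventually_norm_pow_apply_le (hbdd : ∀ n, ‖Tn n‖ ≤ C)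
    (hreg : Tendsto (fun n => T (Tn n x) - Tn (n + n₀) x) atTop (𝓝 0)) (k : ℕ) :
    ∀ᶠ n in atTop, ‖(T ^ k) (Tn n x)‖ ≤ C * ‖x‖ + 1 := by
  have hclose := (tendsto_pow_apply_sub_shift T (u := fun n => Tn n x) hreg k).eventually
    (Metric.ball_mem_nhds 0 one_pos)
  filter_upwards [hclose] with n hn
  rw [dist_zero_right] at hn
  calc ‖(T ^ k) (Tn n x)‖ ≤ ‖Tn (n + k * n₀) x‖ + ‖(T ^ k) (Tn n x) - Tn (n + k * n₀) x‖ :=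
        norm_le_norm_add_norm_sub' _ _
    _ ≤ C * ‖x‖ + 1 := add_le_add ((Tn _).le_of_opNorm_le (hbdd _) x) hn.le

theorem eventually_norm_apply_sum_smul_pow_le {ι : Type*} [Fintype ι] {lam : 𝕜}
    (hlam : ‖lam‖ ≤ 1) (hcomm : ∀ n, Commute T (Tn n)) (hbdd : ∀ n, ‖Tn n‖ ≤ C)
    (hreg : Tendsto (fun n => T (Tn n x) - Tn (n + n₀) x) atTop (𝓝 0)) (k : ι → ℕ) :
    ∀ᶠ n in atTop, ‖Tn n (∑ i, ((lam • T) ^ k i) x)‖ ≤ Fintype.card ι * (C * ‖x‖ + 1) := by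
  filter_upwards [eventually_all.mpr fun i => eventually_norm_pow_apply_le hbdd hreg (k i)]
    with n hn
  have hterm (i : ι) : ‖Tn n (((lam • T) ^ k i) x)‖ ≤ C * ‖x‖ + 1 :=
    calc ‖Tn n (((lam • T) ^ k i) x)‖ = ‖lam‖ ^ k i * ‖(T ^ k i) (Tn n x)‖ := by
          rw [← mul_apply_eq_comp, ← (((hcomm n).smul_left lam).pow_left (k i)).eq,
            mul_apply_eq_comp, smul_pow, smul_apply, norm_smul, norm_pow]
      _ ≤ 1 * (C * ‖x‖ + 1) :=
          mul_le_mul (pow_le_one₀ (norm_nonneg _) hlam) (hn i) (norm_nonneg _) zero_le_one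
      _ = C * ‖x‖ + 1 := one_mul _
  calc ‖Tn n (∑ i, ((lam • T) ^ k i) x)‖ ≤ ∑ i, ‖Tn n (((lam • T) ^ k i) x)‖ := by
        rw [map_sum]; exact norm_sum_le _ _
    _ ≤ ∑ _i : ι, (C * ‖x‖ + 1) := Finset.sum_le_sum fun i _ => hterm i
    _ = Fintype.card ι * (C * ‖x‖ + 1) := by
        rw [Finset.sum_const, Finset.card_univ, nsmul_eq_mul]

end

theorem stmt7_general {X : Type*} [NormedAddCommGroup X] [NormedSpace ℂ X]
    (T : X →L[ℂ] X)
    (lam : ℂ) (hlam : ‖lam‖ ≤ 1)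
    (N : ℕ) (x₀ : X)
    (hdense : @Dense (WeakSpace ℂ X) _
      {y : X | ∃ k : Fin N → ℕ, y = ∑ i, ((lam • T) ^ (k i)) x₀})
    (Tn : ℕ → X →L[ℂ] X) (hκ : ∀ n, InKappa T (Tn n))
    (C : ℝ) (hbdd : ∀ n, ‖Tn n‖ ≤ C)
    (n₀ : ℕ) (hreg : RegularSeq T Tn n₀ 0) :
    ∀ x : X, Tendsto (fun n => Tn n x) atTop (𝓝 0) := by
  have hD : ∀ y ∈ {y : X | ∃ k : Fin N → ℕ, y = ∑ i, ((lam • T) ^ (k i)) x₀},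
      ∀ᶠ n in atTop, ‖Tn n y‖ ≤ N * (C * ‖x₀‖ + 1) := by
    rintro _ ⟨k, rfl⟩
    simpa using eventually_norm_apply_sum_smul_pow_le hlam (fun n => (hκ n).commute) hbdd
      (hreg.tendsto_sub_zero x₀) k
  have hdense' : Dense {y | ∀ᶠ n in atTop, ‖Tn n y‖ ≤ N * (C * ‖x₀‖ + 1)} :=
    (dense_convexHull_of_dense_weakSpace (E := X) hdense).mono
      (convex_setOf_eventually_norm_apply_le.convexHull_subset_iff.mpr hD)
  exact tendsto_apply_zero_of_eventually_norm_apply_le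
    (eventually_norm_apply_le_add_of_dense hbdd hdense')

/-- If λT is weakly hypercyclic with support N for some |λ| ≤ 1, and {T_n} ⊆ κ(T)
is bounded and (n₀,0)-regular, then T_n x → 0 for every x. -/
theorem stmt7 {X : Type*} [NormedAddCommGroup X] [NormedSpace ℂ X] [CompleteSpace X]
    (T : X →L[ℂ] X)
    (lam : ℂ) (hlam : ‖lam‖ ≤ 1)
    (N : ℕ) (hN : 0 < N) (x₀ : X)
    (hdense : @Dense (WeakSpace ℂ X) _
      {y : X | ∃ k : Fin N → ℕ, y = ∑ i, ((lam • T) ^ (k i)) x₀})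
    (Tn : ℕ → X →L[ℂ] X) (hκ : ∀ n, InKappa T (Tn n))
    (C : ℝ) (hbdd : ∀ n, ‖Tn n‖ ≤ C)
    (n₀ : ℕ) (hreg : RegularSeq T Tn n₀ 0) :
    ∀ x : X, Tendsto (fun n => Tn n x) atTop (𝓝 0) :=
  stmt7_general T lam hlam N x₀ hdense Tn hκ C hbdd n₀ hreg
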